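/- arXiv:1803.03924 — 2 statements merged into one kernel-verified Lean document; each statement's English description precedes it below -/
import Mathlib

section
/- (Hamiltonian criterion.) Assume ∇ ∘ j = 0, ev_ψ(j^a_{iα}) = 0 for every ψ ∈ Ē := ker ∇ and all a, i, α, Λ is skew-adjoint (Λ* = −Λ), and additionally ev_ψ(Λ^{αβ}_i) = 0 for every ψ ∈ Ē and all α, β, i. For R ∈ F set δR = j*(∂R) and {K,L} := ⟨δK, Λ(δL)⟩. Then the Jacobi identity holds modulo divergences: for all K, L, M ∈ F, ⟨δK, Λ(δ{L,M})⟩ + ⟨δL, Λ(δ{M,K})⟩ + ⟨δM, Λ(δ{K,L})⟩ ∈ Div F^M; i.e. the bracket {∫K, ∫L} = ∫{K,L} on F/Div F^M satisfies the Jacobi identity. -/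
noncomputable section

variable {𝔽 : Type*} [Field 𝔽] {F : Type*} [CommRing F] [Algebra 𝔽 F] {m : ℕ}
  {A A' : Type*}

/-- Membership in the space of divergences `Div F^M = {Σ_μ D_μ ψ^μ}`. -/
def IsDiv (D : Fin m → Derivation 𝔽 F F) (f : F) : Prop :=
  ∃ ψ : Fin m → F, f = ∑ μ, D μ (ψ μ)

/-- The evolutionary differentiation `ev_φ f = Σ_a φ^a · ∂_a f` (a finite sum). -/
def ev (pa : A → Derivation 𝔽 F F) (φ : A → F) (f : F) : F :=
  ∑ᶠ a, φ a * pa a f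

/-- `(∇φ)^a_μ = D_μ φ^a + Σ_b Γ^a_{μb} · φ^b`; here `Γ b μ a` denotes `Γ^b_{μa}`. -/
def nabla (D : Fin m → Derivation 𝔽 F F) (Γ : A → Fin m → A → F)
    (φ : A → F) (a : A) (μ : Fin m) : F :=
  D μ (φ a) + ∑ᶠ b, Γ a μ b * φ b

/-- `(∇*χ)_a = -Σ_μ D_μ χ^μ_a + Σ_{μ,b} Γ^b_{μa} · χ^μ_b`. -/
def nablaStar (D : Fin m → Derivation 𝔽 F F) (Γ : A → Fin m → A → F)
    (χ : Fin m → A → F) (a : A) : F :=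
  -∑ μ, D μ (χ μ a) + ∑ᶠ b, ∑ μ, Γ b μ a * χ μ b

/-- The pairing `⟨f, φ⟩ = Σ_a f_a · φ^a`. -/
def pair (f φ : A → F) : F := ∑ᶠ a, f a * φ a

/-- `D^i = D_1^{i^1} ∘ ⋯ ∘ D_m^{i^m}`. -/
def Dpow (D : Fin m → Derivation 𝔽 F F) (i : Fin m → ℕ) : F → F :=
  (List.finRange m).foldr (fun μ g => (⇑(D μ))^[i μ] ∘ g) id

/-- `|i| = i^1 + ⋯ + i^m`. -/
def msize {m : ℕ} (i : Fin m → ℕ) : ℕ := ∑ μ, i μ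

/-- The differential operator `P(D)L = Σ_i P_i · D^i L`. -/
def applyP (D : Fin m → Derivation 𝔽 F F) (P : (Fin m → ℕ) → F) (L : F) : F :=
  ∑ᶠ i, P i * Dpow D i L

/-- The Lagrange dual operator `P*(D)K = Σ_i (-1)^{|i|} D^i (P_i · K)`. -/
def applyPstar (D : Fin m → Derivation 𝔽 F F) (P : (Fin m → ℕ) → F) (K : F) : F :=
  ∑ᶠ i, (-1 : F) ^ msize i * Dpow D i (P i * K)

/-- The jet map `(jφ)^a = Σ_{i,α} j^a_{iα} · D^i φ^α`; here `jc a i α` denotes `j^a_{iα}`. -/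
def jmap (D : Fin m → Derivation 𝔽 F F) (jc : A → (Fin m → ℕ) → A' → F)
    (φ : A' → F) (a : A) : F :=
  ∑ᶠ i, ∑ᶠ α, jc a i α * Dpow D i (φ α)

/-- The Lagrange dual `(j*f)_α = Σ_{a,i} (-1)^{|i|} D^i (j^a_{iα} · f_a)`. -/
def jstar (D : Fin m → Derivation 𝔽 F F) (jc : A → (Fin m → ℕ) → A' → F)
    (f : A → F) (α : A') : F :=
  ∑ᶠ a, ∑ᶠ i, (-1 : F) ^ msize i * Dpow D i (jc a i α * f a)

/-- `(Λf)^α = Σ_{β,i} Λ^{αβ}_i · D^i f_β`; here `Λc α β i` denotes `Λ^{αβ}_i`. -/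
def Lam (D : Fin m → Derivation 𝔽 F F) (Λc : A' → A' → (Fin m → ℕ) → F)
    (f : A' → F) (α : A') : F :=
  ∑ᶠ β, ∑ᶠ i, Λc α β i * Dpow D i (f β)

/-- The Lagrange dual `(Λ*f)^α = Σ_{β,i} (-1)^{|i|} D^i (Λ^{βα}_i · f_β)`. -/
def LamStar (D : Fin m → Derivation 𝔽 F F) (Λc : A' → A' → (Fin m → ℕ) → F)
    (f : A' → F) (α : A') : F :=
  ∑ᶠ β, ∑ᶠ i, (-1 : F) ^ msize i * Dpow D i (Λc β α i * f β)

/-- The variational derivative `δR = j*(∂R)`, where `∂R = (∂_a R)`. -/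
def vard (D : Fin m → Derivation 𝔽 F F) (pa : A → Derivation 𝔽 F F)
    (jc : A → (Fin m → ℕ) → A' → F) (R : F) : A' → F :=
  jstar D jc (fun a => pa a R)

/-- The Hamiltonian vector `φ(R) = j(Λ(δR))`. -/
def hamv (D : Fin m → Derivation 𝔽 F F) (pa : A → Derivation 𝔽 F F)
    (jc : A → (Fin m → ℕ) → A' → F) (Λc : A' → A' → (Fin m → ℕ) → F) (R : F) : A → F :=
  jmap D jc (Lam D Λc (vard D pa jc R))

/-- The commutator `[ev_ψ, Λ]`, acting with coefficients `ev_ψ(Λ^{αβ}_i)`. -/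
def evLam (D : Fin m → Derivation 𝔽 F F) (pa : A → Derivation 𝔽 F F)
    (Λc : A' → A' → (Fin m → ℕ) → F) (ψ : A → F) (f : A' → F) (α : A') : F :=
  ∑ᶠ β, ∑ᶠ i, ev pa ψ (Λc α β i) * Dpow D i (f β)


/-!
The bracket `{K, L} = ⟨δK, Λ δL⟩` is skew modulo divergences because `Λ* = -Λ`, and
`⟨δR, χ⟩ ≡ ev_{jχ} R` by integrating `j*` by parts. Hence, writing `ψ_R = j(Λ(δR))` for
the Hamiltonian vector of `R`, `⟨δX, Λ δ{Y,Z}⟩ ≡ -ev_{ψ_X} {Y,Z}`. Since `∇ψ_X = 0`,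
`ev_{ψ_X}` commutes with every `D_μ`, and it kills the coefficients of `j` and `Λ`; so it
passes through `δ` and `Λ`, and integrating by parts once more gives
`⟨δX, Λ δ{Y,Z}⟩ ≡ H_Z(ψ_X, ψ_Y) - H_Y(ψ_X, ψ_Z)` with `H_R(x, y) = Σ x^b y^a ∂_b ∂_a R`.
Each `H_R` is symmetric because the `∂_a` commute, so the cyclic sum cancels.
-/

open Function (HasFiniteSupport)

section Finsum

variable {α β γ M : Type*} [AddCommMonoid M]

theorem finsum_finsum_finsum_eq_finsum {f : α → β → γ → M}
    (h : HasFiniteSupport fun p : α × β × γ => f p.1 p.2.1 p.2.2) :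
    ∑ᶠ a, ∑ᶠ b, ∑ᶠ c, f a b c = ∑ᶠ p : α × β × γ, f p.1 p.2.1 p.2.2 :=
  (finsum_curry₃ _ h).symm

theorem finsum_comm_of_hasFiniteSupport {f : α → β → M}
    (h : HasFiniteSupport fun p : α × β => f p.1 p.2) :
    ∑ᶠ a, ∑ᶠ b, f a b = ∑ᶠ b, ∑ᶠ a, f a b := by
  rw [← finsum_curry _ h, ← finsum_curry (fun p : β × α => f p.2 p.1)
    (h.comp_of_injective (Equiv.prodComm β α).injective),
    ← finsum_comp_equiv (Equiv.prodComm α β)]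
  rfl

theorem finsum_finsum_finsum_rotate {f : γ → α → β → M}
    (h : HasFiniteSupport fun p : α × β × γ => f p.2.2 p.1 p.2.1) :
    ∑ᶠ c, ∑ᶠ a, ∑ᶠ b, f c a b = ∑ᶠ p : α × β × γ, f p.2.2 p.1 p.2.1 := by
  let e : α × β × γ ≃ γ × α × β := (Equiv.prodAssoc _ _ _).symm.trans (Equiv.prodComm _ _)
  rw [finsum_finsum_finsum_eq_finsum (h.comp_of_injective e.symm.injective)]
  exact (finsum_comp_equiv e).symm

theorem finsum_finsum_mul {R : Type*} [NonUnitalNonAssocSemiring R] {f : α → β → R}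
    (h : HasFiniteSupport fun p : α × β => f p.1 p.2) (r : R) :
    (∑ᶠ a, ∑ᶠ b, f a b) * r = ∑ᶠ a, ∑ᶠ b, f a b * r := by
  rw [← finsum_curry _ h, finsum_mul' _ _ h, finsum_curry _ (h.fun_mul_left _)]

theorem mul_finsum_finsum {R : Type*} [NonUnitalNonAssocSemiring R] {f : α → β → R}
    (h : HasFiniteSupport fun p : α × β => f p.1 p.2) (r : R) :
    r * ∑ᶠ a, ∑ᶠ b, f a b = ∑ᶠ a, ∑ᶠ b, r * f a b := by
  rw [← finsum_curry _ h, mul_finsum' _ _ h, finsum_curry _ (h.fun_mul_right _)]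

theorem finite_setOf_mem_and_mem {s : Set α} (hs : s.Finite) {t : α → Set β}
    (ht : ∀ a ∈ s, (t a).Finite) : {p : α × β | p.1 ∈ s ∧ p.2 ∈ t p.1}.Finite :=
  (hs.biUnion fun a ha => (Set.finite_singleton a).prod (ht a ha)).subset
    fun _ ⟨h1, h2⟩ => Set.mem_biUnion h1 ⟨rfl, h2⟩

theorem SModEq.finsum {R N : Type*} [Ring R] [AddCommGroup N] [Module R N] {U : Submodule R N}
    {x y : α → N} (hx : HasFiniteSupport x) (hy : HasFiniteSupport y)
    (h : ∀ a, x a ≡ y a [SMOD U]) : ∑ᶠ a, x a ≡ ∑ᶠ a, y a [SMOD U] := by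
  rw [SModEq.sub_mem, ← finsum_sub_distrib hx hy]
  exact finsum_induction _ U.zero_mem (fun _ _ => U.add_mem) fun a => SModEq.sub_mem.mp (h a)

end Finsum

section Divergences

variable (D : Fin m → Derivation 𝔽 F F)

def divergences : Submodule 𝔽 F where
  carrier := {f | IsDiv D f}
  zero_mem' := ⟨0, by simp⟩
  add_mem' := by
    rintro _ _ ⟨ψ, rfl⟩ ⟨χ, rfl⟩
    exact ⟨ψ + χ, by simp [Finset.sum_add_distrib]⟩
  smul_mem' := by
    rintro c _ ⟨ψ, rfl⟩
    exact ⟨c • ψ, by simp [Finset.smul_sum]⟩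

theorem mem_divergences {f : F} : f ∈ divergences D ↔ IsDiv D f := Iff.rfl

variable {D}

theorem SModEq.neg_one_pow_mul {U : Submodule 𝔽 F} {x y : F} (h : x ≡ y [SMOD U]) (n : ℕ) :
    (-1) ^ n * x ≡ (-1) ^ n * y [SMOD U] := by
  rcases neg_one_pow_eq_or F n with h1 | h1 <;> simp [h1, h, h.neg]

theorem mul_derivation_smodEq (μ : Fin m) (f g : F) :
    g * D μ f ≡ -D μ g * f [SMOD divergences D] := by
  refine SModEq.sub_mem.mpr ⟨fun ν => if ν = μ then g * f else 0, ?_⟩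
  simp only [apply_ite, map_zero, Finset.sum_ite_eq', Finset.mem_univ, if_true,
    Derivation.leibniz, smul_eq_mul]
  ring

theorem mul_iterate_derivation_smodEq (μ : Fin m) (n : ℕ) (f g : F) :
    g * (D μ)^[n] f ≡ (-1) ^ n * (D μ)^[n] g * f [SMOD divergences D] := by
  induction n generalizing f with
  | zero => simp [SModEq.refl]
  | succ n ih =>
    calc g * (D μ)^[n + 1] f
        ≡ (-1) ^ n * ((D μ)^[n] g * D μ f) [SMOD divergences D] := by
          rw [Function.iterate_succ_apply, ← mul_assoc]; exact ih _
      _ ≡ (-1) ^ n * (-D μ ((D μ)^[n] g) * f) [SMOD divergences D] :=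
          (mul_derivation_smodEq μ f _).neg_one_pow_mul n
      _ = (-1) ^ (n + 1) * (D μ)^[n + 1] g * f := by
          rw [Function.iterate_succ_apply' _ n g]; ring

theorem Dpow_apply_zero (i : Fin m → ℕ) : Dpow D i 0 = 0 := by
  unfold Dpow
  induction List.finRange m with
  | nil => rfl
  | cons μ l ih => simp [ih]

theorem commute_foldr_iterate {g : F → F} (hg : ∀ μ, Function.Commute g (D μ))
    (i : Fin m → ℕ) (l : List (Fin m)) :
    Function.Commute g (l.foldr (fun μ g => (⇑(D μ))^[i μ] ∘ g) id) := by
  induction l with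
  | nil => exact Function.Commute.id_right
  | cons μ l ih => exact ((hg μ).iterate_right _).comp_right ih

theorem commute_Dpow {g : F → F} (hg : ∀ μ, Function.Commute g (D μ)) (i : Fin m → ℕ) :
    Function.Commute g (Dpow D i) :=
  commute_foldr_iterate hg i _

theorem mul_Dpow_smodEq (hD : ∀ μ ν, Function.Commute (D μ) (D ν)) (i : Fin m → ℕ) (f g : F) :
    g * Dpow D i f ≡ (-1) ^ msize i * Dpow D i g * f [SMOD divergences D] := by
  rw [msize, Fin.sum_univ_def]
  unfold Dpow
  induction List.finRange m generalizing f g with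
  | nil => simp [SModEq.refl]
  | cons μ l ih =>
    set P := l.foldr (fun μ g => (⇑(D μ))^[i μ] ∘ g) id
    have hP : Function.Commute (D μ)^[i μ] P :=
      commute_foldr_iterate (fun ν => (hD μ ν).iterate_left _) i l
    calc g * (D μ)^[i μ] (P f)
        ≡ (-1) ^ i μ * ((D μ)^[i μ] g * P f) [SMOD divergences D] := by
          rw [← mul_assoc]; exact mul_iterate_derivation_smodEq μ _ _ _
      _ ≡ (-1) ^ i μ * ((-1) ^ (l.map i).sum * P ((D μ)^[i μ] g) * f) [SMOD divergences D] :=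
          (ih _ _).neg_one_pow_mul _
      _ = (-1) ^ ((μ :: l).map i).sum * (D μ)^[i μ] (P g) * f := by
          rw [← hP g]; simp only [List.map_cons, List.sum_cons]; ring

end Divergences

section Jet

variable {D : Fin m → Derivation 𝔽 F F} {c : A → (Fin m → ℕ) → A' → F}

theorem ne_zero_and_ne_zero_of_neg_one_pow_mul_Dpow_ne_zero {k : ℕ} {i : Fin m → ℕ} {x y : F}
    (h : (-1) ^ k * Dpow D i (x * y) ≠ 0) : x ≠ 0 ∧ y ≠ 0 := by
  have hxy : x * y ≠ 0 := by
    rintro hxy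
    simp [hxy, Dpow_apply_zero] at h
  exact ⟨left_ne_zero_of_mul hxy, right_ne_zero_of_mul hxy⟩

theorem finite_setOf_ne_zero_and_ne_zero
    (hc : ∀ a, {p : (Fin m → ℕ) × A' | c a p.1 p.2 ≠ 0}.Finite) {f : A → F}
    (hf : HasFiniteSupport f) :
    {p : A × (Fin m → ℕ) × A' | f p.1 ≠ 0 ∧ c p.1 p.2.1 p.2.2 ≠ 0}.Finite :=
  finite_setOf_mem_and_mem hf fun a _ => hc a

theorem hasFiniteSupport_jstar (hc : ∀ a, {p : (Fin m → ℕ) × A' | c a p.1 p.2 ≠ 0}.Finite)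
    {f : A → F} (hf : HasFiniteSupport f) : HasFiniteSupport (jstar D c f) := by
  refine ((finite_setOf_ne_zero_and_ne_zero hc hf).image fun p => p.2.2).subset fun α hα => ?_
  obtain ⟨a, ha⟩ := not_forall.mp (mt finsum_eq_zero_of_forall_eq_zero hα)
  obtain ⟨i, hi⟩ := not_forall.mp (mt finsum_eq_zero_of_forall_eq_zero ha)
  exact ⟨(a, i, α), (ne_zero_and_ne_zero_of_neg_one_pow_mul_Dpow_ne_zero hi).symm, rfl⟩

theorem pair_jstar_eq_finsum (hc : ∀ a, {p : (Fin m → ℕ) × A' | c a p.1 p.2 ≠ 0}.Finite)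
    {f : A → F} (hf : HasFiniteSupport f) (g : A' → F) :
    pair (jstar D c f) g = ∑ᶠ p : A × (Fin m → ℕ) × A',
      (-1) ^ msize p.2.1 * Dpow D p.2.1 (c p.1 p.2.1 p.2.2 * f p.1) * g p.2.2 := by
  have hS := finite_setOf_ne_zero_and_ne_zero hc hf
  have hterm : ∀ {a i α}, (-1) ^ msize i * Dpow D i (c a i α * f a) ≠ 0 →
      f a ≠ 0 ∧ c a i α ≠ 0 :=
    fun h => (ne_zero_and_ne_zero_of_neg_one_pow_mul_Dpow_ne_zero h).symm
  unfold pair jstar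
  refine (finsum_congr fun α => finsum_finsum_mul ?_ _).trans (finsum_finsum_finsum_rotate ?_)
  · exact (hS.image fun p => (p.1, p.2.1)).subset fun q hq => ⟨(q.1, q.2, α), hterm hq, rfl⟩
  · exact hS.subset fun p hp => hterm (left_ne_zero_of_mul hp)

theorem pair_jmap_eq_finsum (hc : ∀ a, {p : (Fin m → ℕ) × A' | c a p.1 p.2 ≠ 0}.Finite)
    {f : A → F} (hf : HasFiniteSupport f) (g : A' → F) :
    pair f (jmap D c g) = ∑ᶠ p : A × (Fin m → ℕ) × A',
      f p.1 * (c p.1 p.2.1 p.2.2 * Dpow D p.2.1 (g p.2.2)) := by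
  unfold pair jmap
  refine (finsum_congr fun a => mul_finsum_finsum ?_ _).trans (finsum_finsum_finsum_eq_finsum ?_)
  · exact (hc a).subset fun q hq => left_ne_zero_of_mul hq
  · refine (finite_setOf_ne_zero_and_ne_zero hc hf).subset fun p hp => ?_
    exact ⟨left_ne_zero_of_mul hp, left_ne_zero_of_mul (right_ne_zero_of_mul hp)⟩

theorem pair_jstar_smodEq (hD : ∀ μ ν, Function.Commute (D μ) (D ν))
    (hc : ∀ a, {p : (Fin m → ℕ) × A' | c a p.1 p.2 ≠ 0}.Finite)
    {f : A → F} (hf : HasFiniteSupport f) (g : A' → F) :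
    pair (jstar D c f) g ≡ pair f (jmap D c g) [SMOD divergences D] := by
  have hS := finite_setOf_ne_zero_and_ne_zero hc hf
  rw [pair_jstar_eq_finsum hc hf, pair_jmap_eq_finsum hc hf]
  refine SModEq.finsum ?_ ?_ fun p => ?_
  · exact hS.subset fun p hp =>
      (ne_zero_and_ne_zero_of_neg_one_pow_mul_Dpow_ne_zero (left_ne_zero_of_mul hp)).symm
  · exact hS.subset fun p hp =>
      ⟨left_ne_zero_of_mul hp, left_ne_zero_of_mul (right_ne_zero_of_mul hp)⟩
  · convert (mul_Dpow_smodEq hD p.2.1 (g p.2.2) (c p.1 p.2.1 p.2.2 * f p.1)).symm using 1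
    ring

end Jet

section Hamiltonian

variable {D : Fin m → Derivation 𝔽 F F} {Λc : A' → A' → (Fin m → ℕ) → F}

theorem pair_comm (f g : A → F) : pair f g = pair g f :=
  finsum_congr fun _ => mul_comm _ _

theorem pair_neg_left (f g : A → F) : pair (-f) g = -pair f g := by
  simp only [pair, Pi.neg_apply, neg_mul, finsum_neg_distrib]

theorem Lam_eq_jmap (hΛ : ∀ α, {p : (Fin m → ℕ) × A' | Λc α p.2 p.1 ≠ 0}.Finite) (g : A' → F) :
    Lam D Λc g = jmap D (fun α i β => Λc α β i) g := by
  funext α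
  refine finsum_comm_of_hasFiniteSupport ((hΛ α).image Prod.swap |>.subset fun p hp => ?_)
  exact ⟨p.swap, left_ne_zero_of_mul hp, rfl⟩

theorem pair_Lam_smodEq_neg (hD : ∀ μ ν, Function.Commute (D μ) (D ν))
    (hΛ : ∀ α, {p : (Fin m → ℕ) × A' | Λc α p.2 p.1 ≠ 0}.Finite)
    (hskew : ∀ f : A' → F, {α : A' | f α ≠ 0}.Finite →
      ∀ α : A', LamStar D Λc f α = -Lam D Λc f α)
    {f : A' → F} (hf : HasFiniteSupport f) (g : A' → F) :
    pair f (Lam D Λc g) ≡ -pair g (Lam D Λc f) [SMOD divergences D] := by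
  have hstar : -Lam D Λc f = LamStar D Λc f := funext fun α => (hskew f hf α).symm
  rw [Lam_eq_jmap hΛ g, pair_comm g, ← pair_neg_left, hstar]
  exact (pair_jstar_smodEq hD hΛ hf g).symm

end Hamiltonian

section Derivations

variable {D : Fin m → Derivation 𝔽 F F} {pa : A → Derivation 𝔽 F F}

theorem Derivation.map_neg_one_pow_mul (d : Derivation 𝔽 F F) (k : ℕ) (x : F) :
    d ((-1) ^ k * x) = (-1) ^ k * d x := by
  simp [Derivation.leibniz, Derivation.leibniz_pow]

theorem Derivation.map_pair (d : Derivation 𝔽 F F) {f : A → F} (hf : HasFiniteSupport f)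
    (g : A → F) : d (pair f g) = pair (fun a => d (f a)) g + pair f (fun a => d (g a)) := by
  have hdf : HasFiniteSupport fun a => d (f a) := hf.fun_comp (map_zero d)
  rw [pair, map_finsum d (hf.fun_mul_left g), pair, pair, ← finsum_add_distrib
    (hdf.fun_mul_left g) (hf.fun_mul_left _)]
  exact finsum_congr fun a => by rw [Derivation.leibniz, smul_eq_mul, smul_eq_mul]; ring

theorem Derivation.map_finsum_finsum {α β : Type*} (d : Derivation 𝔽 F F) {f : α → β → F}
    (h : HasFiniteSupport fun p : α × β => f p.1 p.2) :
    d (∑ᶠ a, ∑ᶠ b, f a b) = ∑ᶠ a, ∑ᶠ b, d (f a b) := by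
  rw [← finsum_curry _ h, map_finsum d h, finsum_curry _ (h.fun_comp (map_zero d))]

theorem Derivation.map_jmap (d : Derivation 𝔽 F F) (hd : ∀ μ, Function.Commute d (D μ))
    {c : A → (Fin m → ℕ) → A' → F} (hdc : ∀ a i α, d (c a i α) = 0)
    (hc : ∀ a, {p : (Fin m → ℕ) × A' | c a p.1 p.2 ≠ 0}.Finite) (g : A' → F) (a : A) :
    d (jmap D c g a) = jmap D c (fun α => d (g α)) a := by
  rw [jmap, d.map_finsum_finsum]
  · refine finsum_congr fun i => finsum_congr fun α => ?_
    rw [Derivation.leibniz, hdc, smul_zero, add_zero, smul_eq_mul, commute_Dpow hd]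
  · exact (hc a).subset fun p hp => left_ne_zero_of_mul hp

theorem Derivation.map_jstar (d : Derivation 𝔽 F F) (hd : ∀ μ, Function.Commute d (D μ))
    {c : A → (Fin m → ℕ) → A' → F} (hdc : ∀ a i α, d (c a i α) = 0)
    (hc : ∀ a, {p : (Fin m → ℕ) × A' | c a p.1 p.2 ≠ 0}.Finite) {f : A → F}
    (hf : HasFiniteSupport f) (α : A') :
    d (jstar D c f α) = jstar D c (fun a => d (f a)) α := by
  have hS := finite_setOf_ne_zero_and_ne_zero hc hf
  rw [jstar, d.map_finsum_finsum]
  · refine finsum_congr fun a => finsum_congr fun i => ?_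
    rw [d.map_neg_one_pow_mul, commute_Dpow hd, Derivation.leibniz, hdc, smul_zero, add_zero,
      smul_eq_mul]
  · exact (hS.image fun p => (p.1, p.2.1)).subset fun q hq =>
      ⟨(q.1, q.2, α), (ne_zero_and_ne_zero_of_neg_one_pow_mul_Dpow_ne_zero hq).symm, rfl⟩

theorem Derivation.map_Lam (d : Derivation 𝔽 F F) (hd : ∀ μ, Function.Commute d (D μ))
    {Λc : A' → A' → (Fin m → ℕ) → F} (hdΛ : ∀ α β i, d (Λc α β i) = 0)
    (hΛ : ∀ α, {p : (Fin m → ℕ) × A' | Λc α p.2 p.1 ≠ 0}.Finite) (g : A' → F) (α : A') :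
    d (Lam D Λc g α) = Lam D Λc (fun β => d (g β)) α := by
  rw [Lam_eq_jmap hΛ, Lam_eq_jmap hΛ]
  exact d.map_jmap hd (fun α i β => hdΛ α β i) hΛ g α

def evDerivation (hpa : ∀ f : F, {a : A | pa a f ≠ 0}.Finite) (ψ : A → F) :
    Derivation 𝔽 F F :=
  Derivation.mk'
    { toFun := ev pa ψ
      map_add' := fun x y => by
        simp only [ev, map_add, mul_add]
        exact finsum_add_distrib (HasFiniteSupport.fun_mul_right ψ (hpa x))
          (HasFiniteSupport.fun_mul_right ψ (hpa y))
      map_smul' := fun k x => by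
        simp only [ev, Derivation.map_smul, mul_smul_comm, RingHom.id_apply]
        exact (smul_finsum' k (HasFiniteSupport.fun_mul_right ψ (hpa x))).symm }
    fun x y => by
      have hx := HasFiniteSupport.fun_mul_right ψ (hpa x)
      have hy := HasFiniteSupport.fun_mul_right ψ (hpa y)
      simp only [LinearMap.coe_mk, AddHom.coe_mk, ev, Derivation.leibniz, smul_eq_mul]
      rw [mul_finsum' _ x hy, mul_finsum' _ y hx, ← finsum_add_distrib
        (HasFiniteSupport.fun_mul_right _ hy) (HasFiniteSupport.fun_mul_right _ hx)]
      exact finsum_congr fun a => by ring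

end Derivations

section Connection

variable {D : Fin m → Derivation 𝔽 F F} {pa : A → Derivation 𝔽 F F}

theorem derivation_ev_sub_ev_derivation (hpa : ∀ f : F, {a : A | pa a f ≠ 0}.Finite)
    {Γ : A → Fin m → A → F} (hΓfin : ∀ b : A, {p : Fin m × A | Γ b p.1 p.2 ≠ 0}.Finite)
    (hΓ : ∀ (μ : Fin m) (a : A) (f : F), D μ (pa a f) - pa a (D μ f) = ∑ᶠ b, Γ b μ a * pa b f)
    (ψ : A → F) (μ : Fin m) (f : F) :
    D μ (ev pa ψ f) - ev pa ψ (D μ f) = ev pa (fun b => nabla D Γ ψ b μ) f := by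
  have hT : {a | pa a f ≠ 0 ∨ pa a (D μ f) ≠ 0 ∨ ∃ b, pa b f ≠ 0 ∧ Γ b μ a ≠ 0}.Finite :=
    ((hpa f).union ((hpa (D μ f)).union ((hpa f).biUnion fun b _ =>
      (hΓfin b).image Prod.snd))).subset fun a h =>
        h.imp_right (Or.imp_right fun ⟨b, hb, hΓb⟩ => Set.mem_biUnion hb ⟨(μ, a), hΓb, rfl⟩)
  set u := hT.toFinset
  have hu : ∀ {g : A → F} {x : F}, (∀ a, pa a x ≠ 0 → a ∈ u) →
      ∑ᶠ a, g a * pa a x = ∑ a ∈ u, g a * pa a x := fun h =>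
    finsum_eq_sum_of_support_subset _ fun a ha => h a (right_ne_zero_of_mul ha)
  have hfu : ∀ a, pa a f ≠ 0 → a ∈ u := fun a ha => hT.mem_toFinset.mpr (Or.inl ha)
  have hDfu : ∀ a, pa a (D μ f) ≠ 0 → a ∈ u := fun a ha =>
    hT.mem_toFinset.mpr (Or.inr (Or.inl ha))
  have hΓu : ∀ b, pa b f ≠ 0 → ∑ᶠ a, Γ b μ a * ψ a = ∑ a ∈ u, Γ b μ a * ψ a := fun b hb =>
    finsum_eq_sum_of_support_subset _ fun a ha =>
      hT.mem_toFinset.mpr (Or.inr (Or.inr ⟨b, hb, left_ne_zero_of_mul ha⟩))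
  have hnabla : ∀ b ∈ u, nabla D Γ ψ b μ * pa b f
      = (D μ (ψ b) + ∑ a ∈ u, Γ b μ a * ψ a) * pa b f := fun b _ => by
    by_cases hb : pa b f = 0
    · simp [hb]
    · rw [nabla, hΓu b hb]
  have hleib : ∀ a ∈ u, D μ (ψ a * pa a f)
      = ψ a * (pa a (D μ f) + ∑ b ∈ u, Γ b μ a * pa b f) + pa a f * D μ (ψ a) := fun a _ => by
    rw [Derivation.leibniz, smul_eq_mul, smul_eq_mul, ← hu hfu, ← hΓ]
    ring
  rw [ev, ev, ev, hu hfu, hu hDfu, hu hfu, map_sum, Finset.sum_congr rfl hleib,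
    Finset.sum_congr rfl hnabla]
  simp only [mul_add, add_mul, Finset.mul_sum, Finset.sum_mul, Finset.sum_add_distrib]
  have hreorder : ∀ b a, ψ a * (Γ b μ a * pa b f) = Γ b μ a * ψ a * pa b f := fun _ _ => by ring
  rw [Finset.sum_comm]
  simp only [hreorder, mul_comm (pa _ f)]
  ring

theorem commute_ev_of_nabla_eq_zero (hpa : ∀ f : F, {a : A | pa a f ≠ 0}.Finite)
    {Γ : A → Fin m → A → F} (hΓfin : ∀ b : A, {p : Fin m × A | Γ b p.1 p.2 ≠ 0}.Finite)
    (hΓ : ∀ (μ : Fin m) (a : A) (f : F), D μ (pa a f) - pa a (D μ f) = ∑ᶠ b, Γ b μ a * pa b f)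
    {ψ : A → F} (hψ : ∀ a μ, nabla D Γ ψ a μ = 0) (μ : Fin m) :
    Function.Commute (ev pa ψ) (D μ) := fun f => by
  have h := derivation_ev_sub_ev_derivation hpa hΓfin hΓ ψ μ f
  simp only [hψ, ev, zero_mul, finsum_zero] at h
  exact (sub_eq_zero.mp h).symm

end Connection

section Jacobi

variable {pa : A → Derivation 𝔽 F F}

def hessian (pa : A → Derivation 𝔽 F F) (R : F) (x y : A → F) : F :=
  pair (fun a => ev pa x (pa a R)) y

theorem hessian_comm (hpa : ∀ f : F, {a : A | pa a f ≠ 0}.Finite)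
    (hpacomm : ∀ a b (f : F), pa a (pa b f) = pa b (pa a f)) (R : F) (x y : A → F) :
    hessian pa R x y = hessian pa R y x := by
  have hS := finite_setOf_mem_and_mem (hpa R) fun a _ => hpa (pa a R)
  have hexpand : ∀ u v : A → F,
      hessian pa R u v = ∑ᶠ a, ∑ᶠ b, u b * pa b (pa a R) * v a := fun u v =>
    finsum_congr fun a => finsum_mul' _ _ (HasFiniteSupport.fun_mul_right u (hpa (pa a R)))
  rw [hexpand, hexpand, finsum_comm_of_hasFiniteSupport (hS.subset fun p hp => ?_)]
  · exact finsum_congr fun a => finsum_congr fun b => by rw [hpacomm]; ring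
  · have hp' := right_ne_zero_of_mul (left_ne_zero_of_mul hp)
    exact ⟨fun h => hp' (by rw [h, map_zero]), hp'⟩

end Jacobi

theorem pair_vard_Lam_vard_smodEq_hessian
    {D : Fin m → Derivation 𝔽 F F} (hD : ∀ μ ν, Function.Commute (D μ) (D ν))
    {pa : A → Derivation 𝔽 F F} (hpa : ∀ f : F, {a : A | pa a f ≠ 0}.Finite)
    {Γ : A → Fin m → A → F} (hΓfin : ∀ b : A, {p : Fin m × A | Γ b p.1 p.2 ≠ 0}.Finite)
    (hΓ : ∀ (μ : Fin m) (a : A) (f : F), D μ (pa a f) - pa a (D μ f) = ∑ᶠ b, Γ b μ a * pa b f)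
    {jc : A → (Fin m → ℕ) → A' → F}
    (hjfin : ∀ a : A, {p : (Fin m → ℕ) × A' | jc a p.1 p.2 ≠ 0}.Finite)
    (hnj : ∀ (φ : A' → F) (a : A) (μ : Fin m), nabla D Γ (jmap D jc φ) a μ = 0)
    (hevj : ∀ ψ : A → F, (∀ (a : A) (μ : Fin m), nabla D Γ ψ a μ = 0) →
      ∀ (a : A) (i : Fin m → ℕ) (α : A'), ev pa ψ (jc a i α) = 0)
    {Λc : A' → A' → (Fin m → ℕ) → F}
    (hΛ : ∀ α, {p : (Fin m → ℕ) × A' | Λc α p.2 p.1 ≠ 0}.Finite)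
    (hskew : ∀ f : A' → F, {α : A' | f α ≠ 0}.Finite →
      ∀ α : A', LamStar D Λc f α = -Lam D Λc f α)
    (hevΛ : ∀ ψ : A → F, (∀ (a : A) (μ : Fin m), nabla D Γ ψ a μ = 0) →
      ∀ (α β : A') (i : Fin m → ℕ), ev pa ψ (Λc α β i) = 0)
    (X Y Z : F) :
    pair (vard D pa jc X)
        (Lam D Λc (vard D pa jc (pair (vard D pa jc Y) (Lam D Λc (vard D pa jc Z)))))
      ≡ hessian pa Z (hamv D pa jc Λc X) (hamv D pa jc Λc Y)
        - hessian pa Y (hamv D pa jc Λc X) (hamv D pa jc Λc Z) [SMOD divergences D] := by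
  set δ := vard D pa jc
  set ψ := hamv D pa jc Λc X
  have hδ : ∀ R, HasFiniteSupport (δ R) := fun R => hasFiniteSupport_jstar hjfin (hpa R)
  have hψ : ∀ a μ, nabla D Γ ψ a μ = 0 := hnj _
  set d := evDerivation hpa ψ
  have hd : ∀ μ, Function.Commute d (D μ) := commute_ev_of_nabla_eq_zero hpa hΓfin hΓ hψ
  have hdpa : ∀ R, HasFiniteSupport fun a => d (pa a R) := fun R =>
    HasFiniteSupport.fun_comp (hpa R) (map_zero d)
  have hdδ : ∀ R, (fun α => d (δ R α)) = jstar D jc fun a => d (pa a R) := fun R =>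
    funext (d.map_jstar hd (hevj ψ hψ) hjfin (hpa R))
  calc pair (δ X) (Lam D Λc (δ (pair (δ Y) (Lam D Λc (δ Z)))))
      ≡ -pair (δ (pair (δ Y) (Lam D Λc (δ Z)))) (Lam D Λc (δ X)) [SMOD divergences D] :=
        pair_Lam_smodEq_neg hD hΛ hskew (hδ X) _
    _ ≡ -d (pair (δ Y) (Lam D Λc (δ Z))) [SMOD divergences D] := by
        refine (pair_jstar_smodEq hD hjfin (hpa _) _).neg.trans ?_
        rw [pair_comm]
        rfl
    _ = -(pair (jstar D jc fun a => d (pa a Y)) (Lam D Λc (δ Z))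
          + pair (δ Y) (Lam D Λc (jstar D jc fun a => d (pa a Z)))) := by
        rw [d.map_pair (hδ Y), ← hdδ, ← hdδ, funext (d.map_Lam hd (hevΛ ψ hψ) hΛ (δ Z))]
    _ ≡ -(hessian pa Y ψ (hamv D pa jc Λc Z) + -hessian pa Z ψ (hamv D pa jc Λc Y))
          [SMOD divergences D] := by
        refine (SModEq.add (pair_jstar_smodEq hD hjfin (hdpa Y) _) ?_).neg
        refine (pair_Lam_smodEq_neg hD hΛ hskew (hδ Y) _).trans ?_
        exact (pair_jstar_smodEq hD hjfin (hdpa Z) _).neg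
    _ = hessian pa Z ψ (hamv D pa jc Λc Y) - hessian pa Y ψ (hamv D pa jc Λc Z) := by ring

theorem stmt_14_general
    {𝔽 : Type*} [Field 𝔽] {F : Type*} [CommRing F] [Algebra 𝔽 F]
    {m : ℕ} {A A' : Type*}
    (D : Fin m → Derivation 𝔽 F F)
    (hDcomm : ∀ μ ν (f : F), D μ (D ν f) = D ν (D μ f))
    (pa : A → Derivation 𝔽 F F)
    (hpacomm : ∀ a b (f : F), pa a (pa b f) = pa b (pa a f))
    (hpafin : ∀ f : F, {a : A | pa a f ≠ 0}.Finite)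
    (Γ : A → Fin m → A → F)
    (hΓfin : ∀ b : A, {p : Fin m × A | Γ b p.1 p.2 ≠ 0}.Finite)
    (hΓ : ∀ (μ : Fin m) (a : A) (f : F),
      D μ (pa a f) - pa a (D μ f) = ∑ᶠ b, Γ b μ a * pa b f)
    (jc : A → (Fin m → ℕ) → A' → F)
    (hjfin : ∀ a : A, {p : (Fin m → ℕ) × A' | jc a p.1 p.2 ≠ 0}.Finite)
    (hnj : ∀ (φ : A' → F) (a : A) (μ : Fin m), nabla D Γ (jmap D jc φ) a μ = 0)
    (hevj : ∀ ψ : A → F, (∀ (a : A) (μ : Fin m), nabla D Γ ψ a μ = 0) →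
      ∀ (a : A) (i : Fin m → ℕ) (α : A'), ev pa ψ (jc a i α) = 0)
    (Λc : A' → A' → (Fin m → ℕ) → F)
    (hΛfin : ∀ α : A',
      {p : (Fin m → ℕ) × A' | Λc α p.2 p.1 ≠ 0 ∨ Λc p.2 α p.1 ≠ 0}.Finite)
    (hskew : ∀ f : A' → F, {α : A' | f α ≠ 0}.Finite →
      ∀ α : A', LamStar D Λc f α = -Lam D Λc f α)
    (hevΛ : ∀ ψ : A → F, (∀ (a : A) (μ : Fin m), nabla D Γ ψ a μ = 0) →
      ∀ (α β : A') (i : Fin m → ℕ), ev pa ψ (Λc α β i) = 0)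
    (K L M : F) :
    IsDiv D
      (pair (vard D pa jc K)
          (Lam D Λc (vard D pa jc (pair (vard D pa jc L) (Lam D Λc (vard D pa jc M)))))
        + pair (vard D pa jc L)
          (Lam D Λc (vard D pa jc (pair (vard D pa jc M) (Lam D Λc (vard D pa jc K)))))
        + pair (vard D pa jc M)
          (Lam D Λc (vard D pa jc (pair (vard D pa jc K) (Lam D Λc (vard D pa jc L)))))) := by
  have key := pair_vard_Lam_vard_smodEq_hessian hDcomm hpafin hΓfin hΓ hjfin hnj hevj
    (fun α => (hΛfin α).subset fun _ => Or.inl) hskew hevΛ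
  have hsymm := hessian_comm hpafin hpacomm
  refine (mem_divergences D).mp (SModEq.zero.mp ?_)
  refine (((key K L M).add (key L M K)).add (key M K L)).trans ?_
  rw [hsymm M (hamv D pa jc Λc L), hsymm L (hamv D pa jc Λc K), hsymm K (hamv D pa jc Λc M)]
  convert SModEq.refl (0 : F) using 2
  ring

/-- Hamiltonian criterion: if moreover `ev_ψ(Λ^{αβ}_i) = 0` for
all `ψ ∈ Ē`, then the Jacobi identity holds modulo divergences:
`⟨δK, Λ(δ{L,M})⟩ + ⟨δL, Λ(δ{M,K})⟩ + ⟨δM, Λ(δ{K,L})⟩ ∈ Div F^M`. -/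
theorem stmt_14
    {𝔽 : Type*} [Field 𝔽] [CharZero 𝔽] {F : Type*} [CommRing F] [Algebra 𝔽 F]
    {m : ℕ} {A A' : Type*}
    (D : Fin m → Derivation 𝔽 F F)
    (hDcomm : ∀ μ ν (f : F), D μ (D ν f) = D ν (D μ f))
    (pa : A → Derivation 𝔽 F F)
    (hpacomm : ∀ a b (f : F), pa a (pa b f) = pa b (pa a f))
    (hpafin : ∀ f : F, {a : A | pa a f ≠ 0}.Finite)
    (Γ : A → Fin m → A → F)
    (hΓfin : ∀ b : A, {p : Fin m × A | Γ b p.1 p.2 ≠ 0}.Finite)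
    (hΓ : ∀ (μ : Fin m) (a : A) (f : F),
      D μ (pa a f) - pa a (D μ f) = ∑ᶠ b, Γ b μ a * pa b f)
    (jc : A → (Fin m → ℕ) → A' → F)
    (hjfin : ∀ a : A, {p : (Fin m → ℕ) × A' | jc a p.1 p.2 ≠ 0}.Finite)
    (hnj : ∀ (φ : A' → F) (a : A) (μ : Fin m), nabla D Γ (jmap D jc φ) a μ = 0)
    (hevj : ∀ ψ : A → F, (∀ (a : A) (μ : Fin m), nabla D Γ ψ a μ = 0) →
      ∀ (a : A) (i : Fin m → ℕ) (α : A'), ev pa ψ (jc a i α) = 0)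
    (Λc : A' → A' → (Fin m → ℕ) → F)
    (hΛfin : ∀ α : A',
      {p : (Fin m → ℕ) × A' | Λc α p.2 p.1 ≠ 0 ∨ Λc p.2 α p.1 ≠ 0}.Finite)
    (hskew : ∀ f : A' → F, {α : A' | f α ≠ 0}.Finite →
      ∀ α : A', LamStar D Λc f α = -Lam D Λc f α)
    (hevΛ : ∀ ψ : A → F, (∀ (a : A) (μ : Fin m), nabla D Γ ψ a μ = 0) →
      ∀ (α β : A') (i : Fin m → ℕ), ev pa ψ (Λc α β i) = 0)
    (K L M : F) :
    IsDiv D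
      (pair (vard D pa jc K)
          (Lam D Λc (vard D pa jc (pair (vard D pa jc L) (Lam D Λc (vard D pa jc M)))))
        + pair (vard D pa jc L)
          (Lam D Λc (vard D pa jc (pair (vard D pa jc M) (Lam D Λc (vard D pa jc K)))))
        + pair (vard D pa jc M)
          (Lam D Λc (vard D pa jc (pair (vard D pa jc K) (Lam D Λc (vard D pa jc L)))))) :=
  stmt_14_general D hDcomm pa hpacomm hpafin Γ hΓfin hΓ jc hjfin hnj hevj Λc hΛfin hskew hevΛ K L M
end
end

section
/- (Direct sum decomposition in the main example.) The 𝔽-linear space F̄^I_{A′} of finitely supported families splits as an internal direct sum F̄^I_{A′} = E* ⊕ ∇*(F̄^{M I}_{A′}), where E* = {f ∈ F̄^I_{A′} : f^i_α = 0 whenever i ≠ 0} (the image of the injection ι, (ιg)^i_α = g_α if i = 0 and 0 otherwise) and ∇*(F̄^{M I}_{A′}) is the image of ∇*, (∇*χ)^i_α = Σ_μ ( D_μ χ^{μ i}_α + χ^{μ, i−e_μ}_α ) with terms having i^μ = 0 omitted. -/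
/-!
Existence: `E* + ∇*(F̄^{MI}_{A'})` is an additive subgroup, so it suffices to reach the elementary
families `c e_{i,α}` (value `c` at `(i, α)`, zero elsewhere). Since
`∇*(c e_{μ,j,α}) = (D_μ c) e_{j,α} + c e_{j+e_μ,α}`, the family `c e_{j+e_μ,α}` is congruent to
`-(D_μ c) e_{j,α}` modulo `im ∇*`, and induction on the multi-index ends in `E*` at `i = 0`.

Trivial intersection: the integration-by-parts functional `f ↦ Σ_i (-1)^{|i|} D^i f^i_α`, summed
over a finite set of indices closed under the shifts occurring in `χ`, sends `ι g` to `g_α` and kills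
every `∇*(c e_{μ,j,β})`, because `D^{j+e_μ} = D^j D_μ` for commuting derivations.
-/

noncomputable section

variable {𝔽 : Type*} [Field 𝔽] {F : Type*} [CommRing F] [Algebra 𝔽 F] {m : ℕ}
  {A A' : Type*}

/-- In the main example: `(∇*χ)^i_α = Σ_μ (D_μ χ^{μ,i}_α + χ^{μ,i-e_μ}_α)`,
the term `χ^{μ,i-e_μ}_α` being omitted when `i^μ = 0`. -/
def nablaStarEx {𝔽 : Type*} [Field 𝔽] {F : Type*} [CommRing F] [Algebra 𝔽 F] {m : ℕ}
    {A' : Type*} (D : Fin m → Derivation 𝔽 F F)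
    (χ : Fin m → (Fin m → ℕ) → A' → F) (i : Fin m → ℕ) (α : A') : F :=
  ∑ μ, (D μ (χ μ i α)
    + if i μ = 0 then 0 else χ μ (Function.update i μ (i μ - 1)) α)


open Function

theorem List.prod_map_pow_add_single {ι M : Type*} [Monoid M] [DecidableEq ι] (a : ι → M)
    (i : ι → ℕ) {l : List ι} (hl : l.Nodup) {μ : ι} (hμ : μ ∈ l)
    (ha : ∀ ν ∈ l, Commute (a μ) (a ν)) :
    (l.map fun ν => a ν ^ (i + Pi.single μ 1 : ι → ℕ) ν).prod =
      (l.map fun ν => a ν ^ i ν).prod * a μ := by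
  induction l with
  | nil => simp at hμ
  | cons ν l ih =>
    obtain ⟨hνl, hl⟩ := List.nodup_cons.mp hl
    simp only [List.map_cons, List.prod_cons]
    by_cases hνμ : ν = μ
    · subst hνμ
      have htail : (l.map fun κ => a κ ^ (i + Pi.single ν 1 : ι → ℕ) κ) =
          l.map fun κ => a κ ^ i κ :=
        List.map_congr_left fun κ hκ => by
          rw [Pi.add_apply, Pi.single_eq_of_ne (ne_of_mem_of_not_mem hκ hνl), add_zero]
      have hcomm : Commute (a ν) (l.map fun κ => a κ ^ i κ).prod :=
        Commute.list_prod_right _ _ fun x hx => by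
          obtain ⟨κ, hκ, rfl⟩ := List.mem_map.mp hx
          exact (ha κ (List.mem_cons_of_mem _ hκ)).pow_right _
      rw [htail, Pi.add_apply, Pi.single_eq_same, pow_succ, mul_assoc, hcomm.eq, mul_assoc]
    · rw [Pi.add_apply, Pi.single_eq_of_ne hνμ, add_zero, mul_assoc,
        ih hl ((List.mem_cons.mp hμ).resolve_left (Ne.symm hνμ))
          fun κ hκ => ha κ (List.mem_cons_of_mem _ hκ)]

theorem Pi.induction_add_single {ι : Type*} [Fintype ι] [DecidableEq ι] {P : (ι → ℕ) → Prop}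
    (zero : P 0) (add_single : ∀ j μ, P j → P (j + Pi.single μ 1)) (i : ι → ℕ) : P i := by
  rw [← Finset.univ_sum_single i]
  induction (Finset.univ : Finset ι) using Finset.induction_on with
  | empty => simpa using zero
  | insert μ s hμ ih =>
    rw [Finset.sum_insert hμ]
    induction i μ with
    | zero => simpa using ih
    | succ n ihn => simpa [Pi.single_add, add_right_comm] using add_single _ μ ihn

theorem Set.Finite.sum_toFinset_pi_single {ι M : Type*} [DecidableEq ι] [AddCommMonoid M]
    {f : ι → M} (hf : (support f).Finite) : ∑ x ∈ hf.toFinset, Pi.single x (f x) = f := by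
  ext y
  simp only [Finset.sum_apply, Pi.single_apply]
  rw [Finset.sum_ite_eq]
  by_cases hy : f y = 0 <;> simp [hy]

theorem Function.update_sub_one_eq_iff {ι : Type*} [DecidableEq ι] {i j : ι → ℕ} {μ : ι} :
    (i μ ≠ 0 ∧ update i μ (i μ - 1) = j) ↔ i = j + Pi.single μ 1 := by
  constructor
  · rintro ⟨hi, rfl⟩
    ext ν
    by_cases hν : ν = μ
    · subst hν; simp; omega
    · simp [hν]
  · rintro rfl
    refine ⟨by simp, ?_⟩
    ext ν
    by_cases hν : ν = μ
    · subst hν; simp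
    · simp [hν]

theorem msize_add_single (i : Fin m → ℕ) (μ : Fin m) :
    msize (i + Pi.single μ 1) = msize i + 1 := by
  simp [msize, Finset.sum_add_distrib]

section

variable (D : Fin m → Derivation 𝔽 F F)

/-- `D^i` as a product in the endomorphism ring, rather than as the iterated composition `Dpow`. -/
def dpowEnd (i : Fin m → ℕ) : Module.End 𝔽 F :=
  ((List.finRange m).map fun μ => (D μ).toLinearMap ^ i μ).prod

theorem dpowEnd_zero : dpowEnd D 0 = 1 := by
  simp [dpowEnd]

theorem dpowEnd_add_single (hD : ∀ μ ν (f : F), D μ (D ν f) = D ν (D μ f))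
    (i : Fin m → ℕ) (μ : Fin m) :
    dpowEnd D (i + Pi.single μ 1) = dpowEnd D i * (D μ).toLinearMap :=
  List.prod_map_pow_add_single _ i (List.nodup_finRange m) (List.mem_finRange μ)
    fun ν _ => LinearMap.ext (hD μ ν)

/- Families are indexed by the products `I × A'` and `M × I × A'`, so that a finitely supported
family is a finite sum of `Pi.single`s. -/
def iotaHom : (A' → F) →+ ((Fin m → ℕ) × A' → F) :=
  AddMonoidHom.mk' (fun g p => if p.1 = 0 then g p.2 else 0) fun g g' => by
    ext p; by_cases h : p.1 = 0 <;> simp [h]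

def nablaStarHom : (Fin m × (Fin m → ℕ) × A' → F) →+ ((Fin m → ℕ) × A' → F) :=
  AddMonoidHom.mk' (fun χ p => nablaStarEx D (fun μ j α => χ (μ, j, α)) p.1 p.2) fun χ χ' => by
    ext p
    simp only [nablaStarEx, Pi.add_apply, map_add, ← Finset.sum_add_distrib]
    refine Finset.sum_congr rfl fun μ _ => ?_
    split_ifs <;> ring

def alternatingDpowSum (S : Finset (Fin m → ℕ)) (α : A') : ((Fin m → ℕ) × A' → F) →+ F :=
  AddMonoidHom.mk' (fun f => ∑ i ∈ S, (-1 : F) ^ msize i * dpowEnd D i (f (i, α))) fun f f' => by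
    simp [mul_add, Finset.sum_add_distrib]

theorem alternatingDpowSum_iotaHom {S : Finset (Fin m → ℕ)} (hS : 0 ∈ S) (α : A')
    (g : A' → F) : alternatingDpowSum D S α (iotaHom g) = g α := by
  rw [alternatingDpowSum, AddMonoidHom.mk'_apply, Finset.sum_eq_single_of_mem 0 hS]
  · simp [iotaHom, msize, dpowEnd_zero]
  · intro i _ hi
    simp [iotaHom, hi]

variable [DecidableEq A']

theorem iotaHom_single (α : A') (c : F) :
    iotaHom (m := m) (Pi.single α c) = Pi.single (0, α) c := by
  ext ⟨i, β⟩
  by_cases hi : i = 0 <;> simp [iotaHom, Pi.single_apply, hi]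

theorem nablaStarHom_single (μ : Fin m) (j : Fin m → ℕ) (α : A') (c : F) :
    nablaStarHom D (Pi.single (μ, j, α) c) =
      Pi.single (j, α) (D μ c) + Pi.single (j + Pi.single μ 1, α) c := by
  ext ⟨i, β⟩
  simp only [nablaStarHom, AddMonoidHom.mk'_apply, nablaStarEx, Pi.add_apply]
  rw [Fintype.sum_eq_single μ fun ν hν => by simp [hν]]
  have key := Function.update_sub_one_eq_iff (i := i) (j := j) (μ := μ)
  simp only [Pi.single_apply, Prod.mk.injEq, true_and]
  split_ifs <;> simp_all

theorem alternatingDpowSum_pi_single {S : Finset (Fin m → ℕ)} {k : Fin m → ℕ} (hk : k ∈ S)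
    (α β : A') (c : F) :
    alternatingDpowSum D S α (Pi.single (k, β) c) =
      if β = α then (-1 : F) ^ msize k * dpowEnd D k c else 0 := by
  rw [alternatingDpowSum, AddMonoidHom.mk'_apply, Finset.sum_eq_single_of_mem k hk]
  · by_cases hβ : β = α
    · simp [hβ]
    · simp [hβ, Ne.symm hβ]
  · intro i _ hi
    simp [hi]

theorem alternatingDpowSum_nablaStarHom_single (hD : ∀ μ ν (f : F), D μ (D ν f) = D ν (D μ f))
    {S : Finset (Fin m → ℕ)} {μ : Fin m} {j : Fin m → ℕ} (hj : j ∈ S)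
    (hj' : j + Pi.single μ 1 ∈ S) (α β : A') (c : F) :
    alternatingDpowSum D S α (nablaStarHom D (Pi.single (μ, j, β) c)) = 0 := by
  rw [nablaStarHom_single, map_add, alternatingDpowSum_pi_single D hj,
    alternatingDpowSum_pi_single D hj', msize_add_single, dpowEnd_add_single D hD]
  split_ifs
  · simp [pow_succ]
  · simp

theorem eq_zero_of_iotaHom_eq_nablaStarHom (hD : ∀ μ ν (f : F), D μ (D ν f) = D ν (D μ f))
    {g : A' → F} {χ : Fin m × (Fin m → ℕ) × A' → F} (hχ : (support χ).Finite)
    (h : iotaHom g = nablaStarHom D χ) : g = 0 := by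
  ext α
  set T := hχ.toFinset
  set S := insert 0 (T.image (·.2.1) ∪ T.image fun t => t.2.1 + Pi.single t.1 1)
  calc g α = alternatingDpowSum D S α (iotaHom g) :=
        (alternatingDpowSum_iotaHom D (Finset.mem_insert_self _ _) α g).symm
    _ = alternatingDpowSum D S α (nablaStarHom D (∑ t ∈ T, Pi.single t (χ t))) := by
        rw [hχ.sum_toFinset_pi_single, h]
    _ = ∑ t ∈ T, alternatingDpowSum D S α (nablaStarHom D (Pi.single t (χ t))) := by
        simp only [map_sum]
    _ = 0 := by
        refine Finset.sum_eq_zero fun ⟨μ, j, β⟩ ht => ?_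
        apply alternatingDpowSum_nablaStarHom_single D hD <;>
          simp only [S, Finset.mem_insert, Finset.mem_union, Finset.mem_image]
        · exact Or.inr (Or.inl ⟨_, ht, rfl⟩)
        · exact Or.inr (Or.inr ⟨_, ht, rfl⟩)

/-- `E* + ∇*(F̄^{MI}_{A'})`. -/
def rangeIotaSupNablaStar : AddSubgroup ((Fin m → ℕ) × A' → F) :=
  (iotaHom.comp Finsupp.coeFnAddHom).range ⊔ ((nablaStarHom D).comp Finsupp.coeFnAddHom).range

theorem pi_single_mem_rangeIotaSupNablaStar (i : Fin m → ℕ) (α : A') (c : F) :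
    Pi.single (i, α) c ∈ rangeIotaSupNablaStar D := by
  induction i using Pi.induction_add_single generalizing c with
  | zero =>
    refine AddSubgroup.mem_sup_left ⟨Finsupp.single α c, ?_⟩
    show iotaHom ⇑(Finsupp.single α c) = _
    rw [Finsupp.single_eq_pi_single, iotaHom_single]
  | add_single j μ ih =>
    rw [← sub_eq_of_eq_add' (nablaStarHom_single D μ j α c)]
    refine sub_mem (AddSubgroup.mem_sup_right ⟨Finsupp.single (μ, j, α) c, ?_⟩) (ih _)
    show nablaStarHom D ⇑(Finsupp.single _ c) = _
    rw [Finsupp.single_eq_pi_single]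

theorem exists_iotaHom_add_nablaStarHom {f : (Fin m → ℕ) × A' → F} (hf : (support f).Finite) :
    ∃ (g : A' →₀ F) (χ : Fin m × (Fin m → ℕ) × A' →₀ F), iotaHom g + nablaStarHom D χ = f := by
  have hmem : f ∈ rangeIotaSupNablaStar D := by
    rw [← hf.sum_toFinset_pi_single]
    exact sum_mem fun p _ => pi_single_mem_rangeIotaSupNablaStar D p.1 p.2 _
  obtain ⟨_, ⟨g, rfl⟩, _, ⟨χ, rfl⟩, hgχ⟩ := AddSubgroup.mem_sup.mp hmem
  exact ⟨g, χ, hgχ⟩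

end

/-- direct sum decomposition in the main example:
every finitely supported family `f = (f^i_α)` decomposes as `f = ι g + ∇*χ`
with `g` and `χ` finitely supported, and the subspace `E* = im ι` meets
`im ∇*` trivially. -/
theorem stmt_18
    {F : Type*} [CommRing F] [Algebra ℚ F] {m : ℕ} {A' : Type*}
    (D : Fin m → Derivation ℚ F F)
    (hDcomm : ∀ μ ν (f : F), D μ (D ν f) = D ν (D μ f)) :
    (∀ f : (Fin m → ℕ) → A' → F, {p : (Fin m → ℕ) × A' | f p.1 p.2 ≠ 0}.Finite →
      ∃ g : A' → F, {α : A' | g α ≠ 0}.Finite ∧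
      ∃ χ : Fin m → (Fin m → ℕ) → A' → F,
        {p : Fin m × (Fin m → ℕ) × A' | χ p.1 p.2.1 p.2.2 ≠ 0}.Finite ∧
        ∀ (i : Fin m → ℕ) (α : A'),
          f i α = (if i = 0 then g α else 0) + nablaStarEx D χ i α)
    ∧ (∀ (g : A' → F) (χ : Fin m → (Fin m → ℕ) → A' → F),
        {p : Fin m × (Fin m → ℕ) × A' | χ p.1 p.2.1 p.2.2 ≠ 0}.Finite →
        (∀ (i : Fin m → ℕ) (α : A'),
          (if i = 0 then g α else 0) = nablaStarEx D χ i α) →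
        ∀ α : A', g α = 0) := by
  classical
  refine ⟨fun f hf => ?_, fun g χ hχ h => ?_⟩
  · obtain ⟨g, χ, hgχ⟩ := exists_iotaHom_add_nablaStarHom D (f := fun p => f p.1 p.2) hf
    exact ⟨g, g.hasFiniteSupport, fun μ j α => χ (μ, j, α), χ.hasFiniteSupport,
      fun i α => (congrFun hgχ (i, α)).symm⟩
  · have hgχ : iotaHom g = nablaStarHom D fun p => χ p.1 p.2.1 p.2.2 := funext fun p => h p.1 p.2
    exact congrFun (eq_zero_of_iotaHom_eq_nablaStarHom D hDcomm hχ hgχ)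
end
end
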